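/- arXiv:2506.05194 — 2 statements merged into one kernel-verified Lean document; each statement's English description precedes it below -/
import Mathlib

section
/- For every real z ∈ [0,1] one has h(1−z) ≤ z − z²/2 − z³/6, and for every real z ∈ [0, 0.6] one has z − z²/2 − z³/4 ≤ h(1−z). -/
/-- `h x = -x log x` (with `h 0 = 0`, since `Real.log 0 = 0`). -/
noncomputable def entH (x : ℝ) : ℝ := -x * Real.log x

/-- `H x = h x + h (1 - x)`. -/
noncomputable def entHH (x : ℝ) : ℝ := entH x + entH (1 - x)

/-- The rate function `F(x,t)`. -/
noncomputable def entF (x t : ℝ) : ℝ :=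
  (1 / 2) * entH (t * x) + entH ((1 - t) * x) + (1 / 2) * entH (1 - (2 - t) * x) - entHH x

/-!
Both bounds compare `h(1 - z)` with a cubic through the origin, by differentiating the gap.
For the upper bound the derivative of the gap is `-log (1 - z) - z - z²/2 ≥ 0` (a truncation of
the series of `-log (1 - z)`). For the lower bound the gap `g` has `g 0 = g' 0 = 0` and
`g'' z = z (1 - 3z) / (2 (1 - z))`: so `g` increases on `[0, 1/3]` and is concave on `[1/3, 1)`,
and it suffices to check `g (3/5) ≥ 0`, i.e. `log (5/2) ≥ 183/200`.
-/

open Real Set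

lemma continuous_entH : Continuous entH := continuous_negMulLog

lemma hasDerivAt_entH_one_sub {x : ℝ} (hx : x ≠ 1) :
    HasDerivAt (fun y => entH (1 - y)) (log (1 - x) + 1) x := by
  have h := (hasDerivAt_negMulLog (sub_ne_zero.2 hx.symm)).comp x ((hasDerivAt_id x).const_sub 1)
  refine h.congr_deriv ?_
  ring

lemma add_sq_div_two_le_neg_log_one_sub {x : ℝ} (h0 : 0 ≤ x) (h1 : x < 1) :
    x + x ^ 2 / 2 ≤ -log (1 - x) := by
  have h := sum_le_hasSum (Finset.range 2) (fun i _ => by positivity)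
    (hasSum_pow_div_log_of_abs_lt_one (abs_lt.2 ⟨by linarith, h1⟩))
  norm_num [Finset.sum_range_succ] at h
  linarith

lemma entH_one_sub_le {z : ℝ} (h0 : 0 ≤ z) (h1 : z ≤ 1) :
    entH (1 - z) ≤ z - z ^ 2 / 2 - z ^ 3 / 6 := by
  let f (y : ℝ) : ℝ := y - y ^ 2 / 2 - y ^ 3 / 6 - entH (1 - y)
  have hmono : MonotoneOn f (Icc 0 1) := by
    refine monotoneOn_of_hasDerivWithinAt_nonneg (f' := fun y => -log (1 - y) - y - y ^ 2 / 2)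
      (convex_Icc 0 1) ?_ ?_ ?_
    · exact (by fun_prop : Continuous fun y : ℝ => y - y ^ 2 / 2 - y ^ 3 / 6).continuousOn.sub
        (continuous_entH.comp (continuous_const.sub continuous_id)).continuousOn
    · intro x hx
      rw [interior_Icc] at hx
      have h := (((hasDerivAt_id x).sub ((hasDerivAt_pow 2 x).div_const 2)).sub
        ((hasDerivAt_pow 3 x).div_const 6)).sub (hasDerivAt_entH_one_sub hx.2.ne)
      refine (h.congr_deriv ?_).hasDerivWithinAt
      ring
    · intro x hx
      rw [interior_Icc] at hx
      linarith [add_sq_div_two_le_neg_log_one_sub hx.1.le hx.2]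
  simpa [f, entH] using hmono ⟨le_rfl, zero_le_one⟩ ⟨h0, h1⟩ h0

noncomputable def lowerGap (z : ℝ) : ℝ := entH (1 - z) - (z - z ^ 2 / 2 - z ^ 3 / 4)

lemma continuous_lowerGap : Continuous lowerGap :=
  (continuous_entH.comp (continuous_const.sub continuous_id)).sub (by fun_prop)

lemma hasDerivAt_lowerGap {x : ℝ} (hx : x ≠ 1) :
    HasDerivAt lowerGap (log (1 - x) + x + 3 * x ^ 2 / 4) x := by
  have h := (hasDerivAt_entH_one_sub hx).sub ((((hasDerivAt_id x).sub
    ((hasDerivAt_pow 2 x).div_const 2)).sub ((hasDerivAt_pow 3 x).div_const 4)))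
  refine h.congr_deriv ?_
  ring

lemma hasDerivAt_deriv_lowerGap {x : ℝ} (hx : x ≠ 1) :
    HasDerivAt (fun y => log (1 - y) + y + 3 * y ^ 2 / 4)
      (x * (1 - 3 * x) / (2 * (1 - x))) x := by
  have hx' : 1 - x ≠ 0 := sub_ne_zero.2 hx.symm
  have h := ((((hasDerivAt_id x).const_sub 1).log hx').add (hasDerivAt_id x)).add
    (((hasDerivAt_pow 2 x).const_mul 3).div_const 4)
  refine h.congr_deriv ?_
  simp only [id, Nat.cast_ofNat]
  field_simp
  ring

lemma neg_log_one_sub_le {x : ℝ} (h0 : 0 ≤ x) (h1 : x ≤ 1 / 3) :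
    -log (1 - x) ≤ x + 3 * x ^ 2 / 4 := by
  have hmono : MonotoneOn (fun y => log (1 - y) + y + 3 * y ^ 2 / 4) (Icc 0 (1 / 3)) := by
    refine monotoneOn_of_hasDerivWithinAt_nonneg (convex_Icc 0 (1 / 3))
      (f' := fun y => y * (1 - 3 * y) / (2 * (1 - y))) (fun y hy => ?_) (fun y hy => ?_)
      (fun y hy => ?_)
    · exact (hasDerivAt_deriv_lowerGap (by linarith [hy.2])).continuousAt.continuousWithinAt
    all_goals rw [interior_Icc] at hy
    · exact (hasDerivAt_deriv_lowerGap (by linarith [hy.2])).hasDerivWithinAt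
    · apply div_nonneg <;> nlinarith [hy.1, hy.2]
  have := hmono ⟨le_rfl, by norm_num⟩ ⟨h0, h1⟩ h0
  norm_num at this
  linarith

lemma lowerGap_nonneg_of_le_third {z : ℝ} (h0 : 0 ≤ z) (h1 : z ≤ 1 / 3) :
    0 ≤ lowerGap z := by
  have hmono : MonotoneOn lowerGap (Icc 0 (1 / 3)) := by
    refine monotoneOn_of_hasDerivWithinAt_nonneg (convex_Icc 0 (1 / 3))
      (f' := fun y => log (1 - y) + y + 3 * y ^ 2 / 4) continuous_lowerGap.continuousOn
      (fun y hy => ?_) (fun y hy => ?_)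
    all_goals rw [interior_Icc] at hy
    · exact (hasDerivAt_lowerGap (by linarith [hy.2])).hasDerivWithinAt
    · linarith [neg_log_one_sub_le hy.1.le hy.2.le]
  simpa [lowerGap, entH] using hmono ⟨le_rfl, by norm_num⟩ ⟨h0, h1⟩ h0

lemma concaveOn_lowerGap : ConcaveOn ℝ (Icc (1 / 3) 1) lowerGap := by
  refine concaveOn_of_hasDerivWithinAt2_nonpos (f' := fun y => log (1 - y) + y + 3 * y ^ 2 / 4)
    (f'' := fun x => x * (1 - 3 * x) / (2 * (1 - x))) (convex_Icc _ _)
    continuous_lowerGap.continuousOn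
    (fun x hx => ?_) (fun x hx => ?_) (fun x hx => ?_)
  all_goals rw [interior_Icc] at hx
  · exact (hasDerivAt_lowerGap hx.2.ne).hasDerivWithinAt
  · exact (hasDerivAt_deriv_lowerGap hx.2.ne).hasDerivWithinAt
  · apply div_nonpos_of_nonpos_of_nonneg <;> nlinarith [hx.1, hx.2]

lemma lowerGap_three_fifths_nonneg : 0 ≤ lowerGap (3 / 5) := by
  -- `log (5/2) = 2 artanh (3/7)`; three terms of the artanh series give `log (5/2) ≥ 0.9154`.
  have h := sum_range_le_log_div (x := 3 / 7) (by norm_num) (by norm_num) 3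
  norm_num [Finset.sum_range_succ] at h
  have hinv : log (2 / 5) = -log (5 / 2) := by rw [← log_inv]; norm_num
  norm_num [lowerGap, entH, hinv]
  linarith

lemma lowerGap_nonneg {z : ℝ} (h0 : 0 ≤ z) (h1 : z ≤ 3 / 5) : 0 ≤ lowerGap z := by
  rcases le_total z (1 / 3) with hz | hz
  · exact lowerGap_nonneg_of_le_third h0 hz
  · have hseg : z ∈ segment ℝ (1 / 3 : ℝ) (3 / 5) := by
      rw [segment_eq_Icc (by norm_num)]
      exact ⟨hz, h1⟩
    have hmin := concaveOn_lowerGap.ge_on_segment ⟨le_rfl, by norm_num⟩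
      ⟨by norm_num, by norm_num⟩ hseg
    exact (le_min (lowerGap_nonneg_of_le_third (by norm_num) le_rfl)
      lowerGap_three_fifths_nonneg).trans hmin

theorem stmt_16 :
    (∀ z ∈ Set.Icc (0 : ℝ) 1, entH (1 - z) ≤ z - z ^ 2 / 2 - z ^ 3 / 6) ∧
    (∀ z ∈ Set.Icc (0 : ℝ) 0.6, z - z ^ 2 / 2 - z ^ 3 / 4 ≤ entH (1 - z)) := by
  refine ⟨fun z hz => entH_one_sub_le hz.1 hz.2, fun z hz => ?_⟩
  have h := lowerGap_nonneg hz.1 (by norm_num at hz ⊢; exact hz.2)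
  rw [lowerGap] at h
  linarith
end

section
/- For all real numbers x, t with 0 < x ≤ 0.2 and 2x/(1+x) ≤ t ≤ 1, one has F(x,t) ≤ (1/2)·x·t·(1 − x/t + log(x/t)). -/
/-!
Put `s = 1 - t`. Since `h (a * b) = b * h a + a * h b`, the difference `F(x,t)` minus the bound is
`G s` minus a function of `x` alone, where `G s = x h(s) + h(1 - (1 + s) x) / 2 + x s / 2`.
Its derivative `x (log √(1 - (1 + s) x) - log s)` is nonnegative for `0 < s < (1 - x) / (1 + x)`,
because there `s² ≤ 1 - (1 + s) x`; so the difference is largest at `t = 2x / (1 + x)`, where it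
equals `(1 - x) / (2 (1 + x)) · (log (1 - x) + (1 + 2x) log (1 + x) - x²)`. The last factor is
nonpositive for `x ≤ 1/5` by the Taylor expansions of `log (1 ± x)` to third order.
-/

open Real Set

lemma log_one_sub_le_cubic {x : ℝ} (hx0 : 0 ≤ x) (hx1 : x < 1) :
    log (1 - x) ≤ -(x + x ^ 2 / 2 + x ^ 3 / 3) := by
  have := sum_le_hasSum (Finset.range 3) (fun i _ ↦ by positivity)
    (hasSum_pow_div_log_of_abs_lt_one (abs_lt.2 ⟨by linarith, hx1⟩))
  norm_num [Finset.sum_range_succ] at this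
  linarith

lemma log_one_add_le_cubic_add {x : ℝ} (hx0 : 0 ≤ x) (hx1 : x < 1) :
    log (1 + x) ≤ x - x ^ 2 / 2 + x ^ 3 / 3 + x ^ 4 / (1 - x) := by
  have := abs_log_sub_add_sum_range_le (x := -x) (by rwa [abs_neg, abs_of_nonneg hx0]) 3
  rw [abs_neg, abs_of_nonneg hx0, sub_neg_eq_add] at this
  norm_num [Finset.sum_range_succ] at this
  linarith [(abs_le.1 this).2]

lemma log_one_sub_add_mul_log_one_add_le {x : ℝ} (hx0 : 0 ≤ x) (hx : x ≤ 1 / 5) :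
    log (1 - x) + (1 + 2 * x) * log (1 + x) ≤ x ^ 2 := by
  have h1 := log_one_sub_le_cubic hx0 (by linarith)
  have h2 := mul_le_mul_of_nonneg_left (log_one_add_le_cubic_add hx0 (by linarith))
    (by linarith : (0 : ℝ) ≤ 1 + 2 * x)
  have h3 : x ^ 4 / (1 - x) ≤ 5 / 4 * x ^ 4 := by
    rw [div_le_iff₀ (by linarith)]; nlinarith [pow_nonneg hx0 4]
  nlinarith [pow_nonneg hx0 3, pow_nonneg hx0 4,
    mul_le_mul_of_nonneg_left h3 (by linarith : (0 : ℝ) ≤ 1 + 2 * x)]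

lemma entH_eq_negMulLog : entH = negMulLog := rfl

noncomputable def entGap (x s : ℝ) : ℝ :=
  x * negMulLog s + (1 / 2) * negMulLog (1 - (1 + s) * x) + x * s / 2

lemma entF_sub_bound_eq {x t : ℝ} (ht : t ≠ 0) :
    entF x t - (1 / 2) * x * t * (1 - x / t + log (x / t))
      = entGap x (1 - t) - negMulLog (1 - x) - x / 2 + x ^ 2 / 2 := by
  have hxt : x * t * log (x / t) = x * negMulLog t - t * negMulLog x := by
    rcases eq_or_ne x 0 with rfl | hx
    · simp
    · rw [log_div hx ht, negMulLog, negMulLog]; ring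
  have hw : 1 - (2 - t) * x = 1 - (1 + (1 - t)) * x := by ring
  unfold entF entHH entGap
  rw [entH_eq_negMulLog, negMulLog_mul, negMulLog_mul, hw]
  have hxx : x * t * (x / t) = x ^ 2 := by field_simp
  linear_combination (-1 / 2 : ℝ) * hxt + (1 / 2 : ℝ) * hxx

lemma monotoneOn_entGap {x : ℝ} (hx : 0 ≤ x) :
    MonotoneOn (entGap x) (Icc 0 ((1 - x) / (1 + x))) := by
  have hx1 : 0 < 1 + x := by linarith
  refine monotoneOn_of_hasDerivWithinAt_nonneg
    (f' := fun s ↦ x * ((1 / 2) * log (1 - (1 + s) * x) - log s)) (convex_Icc _ _) (by unfold entGap; fun_prop) (fun s hs ↦ ?_) (fun s hs ↦ ?_)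
  all_goals
    rw [interior_Icc] at hs
    obtain ⟨hs0, hs1⟩ := hs
    have hsw : s < 1 - (1 + s) * x := by
      rw [lt_div_iff₀ hx1] at hs1; nlinarith
  · refine HasDerivAt.hasDerivWithinAt ?_
    have hw : HasDerivAt (fun s ↦ 1 - (1 + s) * x) (-x) s := by
      simpa using (((hasDerivAt_id s).const_add 1).mul_const x).const_sub 1
    have := (((hasDerivAt_negMulLog hs0.ne').const_mul x).add
      (((hasDerivAt_negMulLog (by linarith)).comp s hw).const_mul (1 / 2))).add
      (((hasDerivAt_id s).const_mul x).div_const 2)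
    exact this.congr_deriv (by simp; ring)
  · have hs_lt_one : s < 1 := by
      rw [lt_div_iff₀ hx1] at hs1; nlinarith
    have hlog := log_le_log (by positivity) (by nlinarith : s ^ 2 ≤ 1 - (1 + s) * x)
    rw [log_pow, Nat.cast_ofNat] at hlog
    exact mul_nonneg hx (by linarith)

lemma entGap_endpoint_le {x : ℝ} (hx0 : 0 ≤ x) (hx : x ≤ 1 / 5) :
    entGap x ((1 - x) / (1 + x)) ≤ negMulLog (1 - x) + x / 2 - x ^ 2 / 2 := by
  have h1x : 0 < 1 + x := by linarith
  have h1x' : 0 < 1 - x := by linarith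
  have hw : 1 - (1 + (1 - x) / (1 + x)) * x = (1 - x) / (1 + x) := by field_simp; ring
  have key : entGap x ((1 - x) / (1 + x)) - (negMulLog (1 - x) + x / 2 - x ^ 2 / 2)
      = (1 - x) / (2 * (1 + x)) * (log (1 - x) + (1 + 2 * x) * log (1 + x) - x ^ 2) := by
    unfold entGap negMulLog
    rw [hw, log_div h1x'.ne' h1x.ne']
    field_simp
    ring
  have := mul_nonpos_of_nonneg_of_nonpos (by positivity : 0 ≤ (1 - x) / (2 * (1 + x)))
    (sub_nonpos.2 (log_one_sub_add_mul_log_one_add_le hx0 hx))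
  linarith

theorem stmt_18 (x t : ℝ) (hx : 0 < x) (hx2 : x ≤ 0.2) (hxt : 2 * x / (1 + x) ≤ t)
    (ht : t ≤ 1) :
    entF x t ≤ (1 / 2) * x * t * (1 - x / t + Real.log (x / t)) := by
  norm_num at hx2
  have h1x : 0 < 1 + x := by linarith
  have ht0 : 0 < t := (div_pos (by linarith) h1x).trans_le hxt
  have hs : 1 - t ∈ Icc 0 ((1 - x) / (1 + x)) := by
    rw [div_le_iff₀ h1x] at hxt
    exact ⟨by linarith, by rw [le_div_iff₀ h1x]; linarith⟩
  have hend : (1 - x) / (1 + x) ∈ Icc 0 ((1 - x) / (1 + x)) := ⟨hs.1.trans hs.2, le_rfl⟩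
  rw [← sub_nonpos, entF_sub_bound_eq ht0.ne']
  linarith [monotoneOn_entGap hx.le hs hend hs.2, entGap_endpoint_le hx.le hx2]
end
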